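/- Let (C, ⊗) be a locally presentable closed symmetric monoidal abelian category whose monoidal unit V is a finitely presented projective separator. If M and N are finitely presented objects of C, then the tensor product M ⊗ N is finitely presented. -/

import Mathlib

open CategoryTheory CategoryTheory.Limits Opposite

universe v u

namespace Paper

variable {C : Type u} [Category.{v} C]

/-- The canonical comparison map `colim_α Hom(X, M_α) ⟶ Hom(X, colim_α M_α)` induced by the
structure morphisms of a cocone `c` on a diagram `D`. -/
noncomputable def canonicalMap (X : C) {J : Type v} [SmallCategory J]
    (D : J ⥤ C) (c : Cocone D) :
    colimit (D ⋙ coyoneda.obj (op X)) → (X ⟶ c.pt) :=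
  colimit.desc (D ⋙ coyoneda.obj (op X)) ((coyoneda.obj (op X)).mapCocone c)

/-- An object `X` is finitely presented if for every filtered inductive system the canonical map
`colim_α Hom(X, M_α) → Hom(X, colim_α M_α)` is bijective. -/
def IsFinitelyPresented (X : C) : Prop :=
  ∀ (J : Type v) [SmallCategory J] [IsFiltered J] (D : J ⥤ C) (c : Cocone D),
    IsColimit c → Function.Bijective (canonicalMap X D c)

/-- An object `X` is finitely generated if for every filtered inductive system the canonical map
`colim_α Hom(X, M_α) → Hom(X, colim_α M_α)` is injective. -/
def IsFinitelyGenerated (X : C) : Prop :=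
  ∀ (J : Type v) [SmallCategory J] [IsFiltered J] (D : J ⥤ C) (c : Cocone D),
    IsColimit c → Function.Injective (canonicalMap X D c)

/-- A small category `J` is `κ`-filtered if every diagram in `J` of size `< κ` admits a cocone. -/
def IsCardinalFiltered (J : Type v) [SmallCategory J] (κ : Cardinal.{v}) : Prop :=
  ∀ (K : Type v) [SmallCategory K], Cardinal.mk (Σ k k' : K, k ⟶ k') < κ →
    ∀ F : K ⥤ J, Nonempty (Cocone F)

/-- An object `X` is `κ`-presentable if `Hom(X, -)` preserves `κ`-filtered colimits. -/
def IsCardinalPresentableObj (κ : Cardinal.{v}) (X : C) : Prop :=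
  ∀ (J : Type v) [SmallCategory J], IsCardinalFiltered J κ →
    ∀ (D : J ⥤ C) (c : Cocone D), IsColimit c → Function.Bijective (canonicalMap X D c)

/-- A presentation of `X` as a `κ`-filtered colimit of objects belonging to `S`. -/
structure FilteredPresentation (κ : Cardinal.{v}) (S : Set C) (X : C) where
  J : Type v
  [cat : SmallCategory J]
  filtered : IsCardinalFiltered J κ
  D : J ⥤ C
  mem : ∀ j, D.obj j ∈ S
  c : Cocone D
  isColimit : IsColimit c
  eq : c.pt = X

attribute [instance] FilteredPresentation.cat

/-- A category is locally presentable if it is cocomplete and there are a regular cardinal `κ`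
and a set of `κ`-presentable objects such that every object is a `κ`-filtered colimit of
objects from this set. -/
class LocallyPresentable (C : Type u) [Category.{v} C] : Prop where
  hasColimits : HasColimits C
  presentable : ∃ κ : Cardinal.{v}, κ.IsRegular ∧ ∃ S : Set C, Small.{v} ↥S ∧
    (∀ X ∈ S, IsCardinalPresentableObj κ X) ∧ ∀ X : C, Nonempty (FilteredPresentation κ S X)

instance (priority := 100) [LocallyPresentable C] : HasColimits C :=
  LocallyPresentable.hasColimits

end Paper


/-! By the tensor-hom adjunction `Hom(M ⊗ N, -) ≅ Hom(N, [M, -])`, so it suffices that the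
internal hom `[M, -]` preserves filtered colimits. The comparison map
`colim [M, D α] ⟶ [M, colim D α]` becomes bijective under `Hom(V, -)`, because
`Hom(V, [M, -]) ≅ Hom(M, -)` and both `V` and `M` are finitely presented; in an abelian category
a separator detects isomorphisms this way. -/

namespace Paper

section CanonicalMap

variable {C : Type u} [Category.{v} C] {J : Type v} [SmallCategory J]

@[simp]
lemma canonicalMap_ι (X : C) (D : J ⥤ C) (c : Cocone D) (j : J) (f : X ⟶ D.obj j) :
    canonicalMap X D c (colimit.ι (D ⋙ coyoneda.obj (op X)) j f) = f ≫ c.ι.app j := by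
  simp [canonicalMap]

lemma comp_desc_comp_canonicalMap (X : C) (D : J ⥤ C) [HasColimit D] (c : Cocone D) :
    (fun g : X ⟶ colimit D => g ≫ colimit.desc D c) ∘ canonicalMap X D (colimit.cocone D) =
      canonicalMap X D c := by
  funext x
  obtain ⟨j, f, rfl⟩ := Types.jointly_surjective' x
  rw [Function.comp_apply, canonicalMap_ι, canonicalMap_ι]
  simp

lemma canonicalMap_bijective_iff_of_iso {C' : Type*} [Category.{v} C'] (D : J ⥤ C)
    (c : Cocone D) (H : C ⥤ C') (W : C') (X : C)
    (e : H ⋙ coyoneda.obj (op W) ≅ coyoneda.obj (op X)) :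
    Function.Bijective (canonicalMap W (D ⋙ H) (H.mapCocone c)) ↔
      Function.Bijective (canonicalMap X D c) := by
  let i := HasColimit.isoOfNatIso (Functor.isoWhiskerLeft D e)
  have hcomm : e.hom.app c.pt ∘ canonicalMap W (D ⋙ H) (H.mapCocone c) =
      canonicalMap X D c ∘ i.hom := by
    funext x
    obtain ⟨j, f, rfl⟩ := Types.jointly_surjective' x
    have hι : i.hom (colimit.ι ((D ⋙ H) ⋙ coyoneda.obj (op W)) j f) =
        colimit.ι (D ⋙ coyoneda.obj (op X)) j (e.hom.app (D.obj j) f) :=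
      ConcreteCategory.congr_hom (HasColimit.isoOfNatIso_ι_hom (Functor.isoWhiskerLeft D e) j) f
    calc _ = e.hom.app c.pt (f ≫ H.map (c.ι.app j)) := by
            rw [Function.comp_apply, canonicalMap_ι]; rfl
      _ = e.hom.app (D.obj j) f ≫ c.ι.app j :=
        ConcreteCategory.congr_hom (e.hom.naturality (c.ι.app j)) f
      _ = _ := by rw [Function.comp_apply, hι, canonicalMap_ι]
  have he := (isIso_iff_bijective (e.hom.app c.pt)).1 inferInstance
  have hi := (isIso_iff_bijective i.hom).1 inferInstance
  rw [← Function.Bijective.of_comp_iff' he, hcomm, Function.Bijective.of_comp_iff _ hi]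

end CanonicalMap

lemma isIso_of_isSeparator_of_bijective {C : Type u} [Category.{v} C] [Abelian C] {V A B : C}
    (hV : IsSeparator V) (f : A ⟶ B) (hf : Function.Bijective (fun s : V ⟶ A => s ≫ f)) :
    IsIso f := by
  have : Mono f := ⟨fun g h hgh => hV.def _ _ fun s => hf.1 <| by
    simp only [Category.assoc, hgh]⟩
  have : Epi f := Abelian.epi_of_cokernel_π_eq_zero _ <| hV.def _ _ fun s => by
    obtain ⟨t, rfl⟩ := hf.2 s
    simp
  exact isIso_of_mono_of_epi f

noncomputable def isColimitOfBijectiveCanonicalMap {C : Type u} [Category.{v} C] [Abelian C]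
    {V : C} (hV : IsFinitelyPresented V) (hsep : IsSeparator V) {J : Type v} [SmallCategory J]
    [IsFiltered J] (D : J ⥤ C) [HasColimit D] (c : Cocone D)
    (h : Function.Bijective (canonicalMap V D c)) : IsColimit c := by
  rw [← comp_desc_comp_canonicalMap] at h
  have : IsIso ((colimit.isColimit D).desc c) :=
    isIso_of_isSeparator_of_bijective hsep (colimit.desc D c)
      ((Function.Bijective.of_comp_iff _ (hV J D _ (colimit.isColimit D))).1 h)
  exact IsColimit.ofPointIso (colimit.isColimit D)

open MonoidalCategory in
noncomputable def ihomCompCoyonedaIso {C : Type u} [Category.{v} C] [MonoidalCategory C]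
    [MonoidalClosed C] (M W : C) : ihom M ⋙ coyoneda.obj (op W) ≅ coyoneda.obj (op (M ⊗ W)) :=
  ((ihom.adjunction M).compCoyonedaIso.app (op W)).symm

open MonoidalCategory in
theorem statement3_general {C : Type u} [Category.{v} C] [Abelian C] [MonoidalCategory C]
    [MonoidalClosed C] [LocallyPresentable C]
    (hV1 : IsFinitelyPresented (𝟙_ C))
    (hV3 : IsSeparator (𝟙_ C))
    (M N : C) (hM : IsFinitelyPresented M) (hN : IsFinitelyPresented N) :
    IsFinitelyPresented (M ⊗ N) := by
  intro J _ _ D c hc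
  have hc' : IsColimit ((ihom M).mapCocone c) :=
    isColimitOfBijectiveCanonicalMap hV1 hV3 _ _ <|
      (canonicalMap_bijective_iff_of_iso D c _ _ _
        (ihomCompCoyonedaIso M (𝟙_ C) ≪≫ coyoneda.mapIso (ρ_ M).op.symm)).2 (hM J D c hc)
  exact (canonicalMap_bijective_iff_of_iso D c _ _ _ (ihomCompCoyonedaIso M N)).1
    (hN J _ _ hc')

open MonoidalCategory in
/-- In a locally presentable closed symmetric monoidal abelian category whose
unit is a finitely presented projective separator, the tensor product of two finitely
presented objects is finitely presented. -/
theorem statement3 {C : Type u} [Category.{v} C] [Abelian C] [MonoidalCategory C]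
    [SymmetricCategory C] [MonoidalClosed C] [LocallyPresentable C]
    (hV1 : IsFinitelyPresented (𝟙_ C)) (hV2 : Projective (𝟙_ C))
    (hV3 : IsSeparator (𝟙_ C))
    (M N : C) (hM : IsFinitelyPresented M) (hN : IsFinitelyPresented N) :
    IsFinitelyPresented (M ⊗ N) :=
  statement3_general hV1 hV3 M N hM hN

end Paper
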